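/- Let m = s^{i₁} t^{j₁} m' be a monomial in the recursive matrices s = [[1,0],[0,2s]], t = [[0,2s],[0,2t]] with i₁ ≥ 0, j₁ ≥ 1 and m' = s^{i₂}t^{j₂}···s^{i_l}t^{j_l}. Then m has the block form [[0, 2^{|m|-i₁} s t^{j₁-1} m'],[0, 2^{|m|} m]], where |m| is the formal length of m. -/
import Mathlib


/-!
The tree-indexed vector space `V` over `ℚ` with basis the free monoid on two letters
(encoded as `List Bool`). The functionally recursive matrices `s = [[1,0],[0,2s]]` and
`t = [[0,2s],[0,2t]]` of the ring `R₁` act on `V = ℚ·φ ⊕ 0V ⊕ 1V` by the block recursion.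
-/

noncomputable section

abbrev V : Type := List Bool →₀ ℚ

/-- Prefixing by a letter: the embedding `V → yV`. -/
def pre (b : Bool) : V →ₗ[ℚ] V := Finsupp.lmapDomain ℚ ℚ (List.cons b)

/-- Value of `s = [[1,0],[0,2s]]` on a basis word, by recursion. -/
def S1fun : List Bool → V
  | [] => Finsupp.single [] 1
  | false :: u => Finsupp.single (false :: u) 1
  | true :: u => (2 : ℚ) • pre true (S1fun u)

/-- Value of `t = [[0,2s],[0,2t]]` on a basis word, by recursion. -/
def T1fun : List Bool → V
  | [] => 0
  | false :: _ => 0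
  | true :: u => (2 : ℚ) • (pre false (S1fun u) + pre true (T1fun u))

/-- The generator `s` of `R₁`. -/
def s1 : Module.End ℚ V := Finsupp.linearCombination ℚ S1fun

/-- The generator `t` of `R₁`. -/
def t1 : Module.End ℚ V := Finsupp.linearCombination ℚ T1fun

/-- The level-preserving operator with block form `[[e,0,0],[0,A,B],[0,C,D]]` on
`V = ℚ·φ ⊕ 0V ⊕ 1V`, written `e ⊕ [[A,B],[C,D]]`. -/
def blk (e : ℚ) (A B C D : Module.End ℚ V) : Module.End ℚ V :=
  Finsupp.linearCombination ℚ (fun w => match w with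
    | [] => Finsupp.single ([] : List Bool) e
    | false :: u => pre false (A (Finsupp.single u 1)) + pre true (C (Finsupp.single u 1))
    | true :: u => pre false (B (Finsupp.single u 1)) + pre true (D (Finsupp.single u 1)))

/-- The monomial in `s, t` given by a word (`false ↦ s`, `true ↦ t`); the empty word
gives the identity. -/
def mono1 (w : List Bool) : Module.End ℚ V :=
  (w.map (fun b => if b then t1 else s1)).prod

lemma pre_single (b : Bool) (u : List Bool) (c : ℚ) :
    pre b (Finsupp.single u c) = Finsupp.single (b :: u) c := by
  simp [pre, Finsupp.mapDomain_single]

lemma end_ext {f g : Module.End ℚ V}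
    (h : ∀ w : List Bool, f (Finsupp.single w 1) = g (Finsupp.single w 1)) : f = g := by
  refine Finsupp.lhom_ext fun w c => ?_
  have hc : Finsupp.single w c = c • Finsupp.single w (1:ℚ) := by simp
  rw [hc, map_smul, map_smul, h]

lemma blk_nil (e : ℚ) (A B C D : Module.End ℚ V) :
    blk e A B C D (Finsupp.single [] 1) = Finsupp.single ([] : List Bool) e := by
  simp [blk, Finsupp.linearCombination_single]

lemma blk_false (e : ℚ) (A B C D : Module.End ℚ V) (u : List Bool) :
    blk e A B C D (Finsupp.single (false :: u) 1) =
      pre false (A (Finsupp.single u 1)) + pre true (C (Finsupp.single u 1)) := by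
  simp [blk, Finsupp.linearCombination_single]

lemma blk_true (e : ℚ) (A B C D : Module.End ℚ V) (u : List Bool) :
    blk e A B C D (Finsupp.single (true :: u) 1) =
      pre false (B (Finsupp.single u 1)) + pre true (D (Finsupp.single u 1)) := by
  simp [blk, Finsupp.linearCombination_single]

lemma blk_pre_false (e : ℚ) (A B C D : Module.End ℚ V) (x : V) :
    blk e A B C D (pre false x) = pre false (A x) + pre true (C x) := by
  have h : (blk e A B C D) ∘ₗ pre false = pre false ∘ₗ A + pre true ∘ₗ C := by
    refine Finsupp.lhom_ext fun u c => ?_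
    have hc : Finsupp.single u c = c • Finsupp.single u (1:ℚ) := by simp
    simp only [LinearMap.comp_apply, LinearMap.add_apply, hc, map_smul, pre_single, blk_false,
      smul_add]
  exact LinearMap.congr_fun h x

lemma blk_pre_true (e : ℚ) (A B C D : Module.End ℚ V) (x : V) :
    blk e A B C D (pre true x) = pre false (B x) + pre true (D x) := by
  have h : (blk e A B C D) ∘ₗ pre true = pre false ∘ₗ B + pre true ∘ₗ D := by
    refine Finsupp.lhom_ext fun u c => ?_
    have hc : Finsupp.single u c = c • Finsupp.single u (1:ℚ) := by simp
    simp only [LinearMap.comp_apply, LinearMap.add_apply, hc, map_smul, pre_single, blk_true,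
      smul_add]
  exact LinearMap.congr_fun h x

lemma blk_mul (e e' : ℚ) (A B C D A' B' C' D' : Module.End ℚ V) :
    blk e A B C D * blk e' A' B' C' D' =
      blk (e*e') (A*A' + B*C') (A*B' + B*D') (C*A' + D*C') (C*B' + D*D') := by
  apply end_ext; intro w
  match w with
  | [] =>
    have h : Finsupp.single ([] : List Bool) e' = e' • Finsupp.single ([] : List Bool) (1:ℚ) := by
      simp
    simp only [Module.End.mul_apply, blk_nil, h, map_smul, blk_nil]
    simp [Finsupp.smul_single, mul_comm]
  | false :: u =>
    simp only [Module.End.mul_apply, blk_false, map_add, blk_pre_false, blk_pre_true,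
      LinearMap.add_apply, Module.End.mul_apply]
    abel
  | true :: u =>
    simp only [Module.End.mul_apply, blk_true, map_add, blk_pre_false, blk_pre_true,
      LinearMap.add_apply, Module.End.mul_apply]
    abel

lemma blk_congr {e e' : ℚ} {A A' B B' C C' D D' : Module.End ℚ V}
    (he : e = e') (hA : A = A') (hB : B = B') (hC : C = C') (hD : D = D') :
    blk e A B C D = blk e' A' B' C' D' := by
  rw [he, hA, hB, hC, hD]

lemma one_blk : (1 : Module.End ℚ V) = blk 1 1 0 0 1 := by
  apply end_ext; intro w
  match w with
  | [] => simp [blk_nil]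
  | false :: u => simp [blk_false, pre_single]
  | true :: u => simp [blk_true, pre_single]

lemma s1_single (u : List Bool) : s1 (Finsupp.single u 1) = S1fun u := by
  simp [s1, Finsupp.linearCombination_single]

lemma t1_single (u : List Bool) : t1 (Finsupp.single u 1) = T1fun u := by
  simp [t1, Finsupp.linearCombination_single]

lemma s1_blk : s1 = blk 1 1 0 0 ((2:ℚ) • s1) := by
  apply end_ext; intro w
  match w with
  | [] => simp [s1_single, S1fun, blk_nil]
  | false :: u => simp [s1_single, S1fun, blk_false, pre_single]
  | true :: u => simp [s1_single, S1fun, blk_true, pre_single, map_smul]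

lemma t1_blk : t1 = blk 0 0 ((2:ℚ) • s1) 0 ((2:ℚ) • t1) := by
  apply end_ext; intro w
  match w with
  | [] => simp [t1_single, T1fun, blk_nil]
  | false :: u => simp [t1_single, T1fun, blk_false, pre_single]
  | true :: u =>
    simp [t1_single, T1fun, blk_true, s1_single, map_smul, smul_add]

lemma mono1_nil : mono1 [] = 1 := rfl

lemma mono1_cons (b : Bool) (w : List Bool) :
    mono1 (b :: w) = (if b then t1 else s1) * mono1 w := rfl

lemma mono1_blk (w : List Bool) :
    ∃ e A B, mono1 w = blk e A B 0 ((2:ℚ) ^ w.length • mono1 w) := by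
  induction w with
  | nil => exact ⟨1, 1, 0, by simpa [mono1_nil] using one_blk⟩
  | cons b w ih =>
    obtain ⟨e, A, B, h⟩ := ih
    cases b with
    | false =>
      refine ⟨e, A, B, ?_⟩
      have hc : mono1 (false :: w) = s1 * mono1 w := by simp [mono1_cons]
      conv_lhs => rw [hc, s1_blk, h]
      rw [blk_mul]
      refine blk_congr (by ring) (by simp) (by simp) (by simp) ?_
      rw [hc]
      simp [smul_mul_assoc, mul_smul_comm, smul_smul, pow_succ, List.length_cons, mul_comm]
    | true =>
      refine ⟨0, 0, (2:ℚ) ^ (w.length + 1) • (s1 * mono1 w), ?_⟩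
      have hc : mono1 (true :: w) = t1 * mono1 w := by simp [mono1_cons]
      conv_lhs => rw [hc, t1_blk, h]
      rw [blk_mul]
      refine blk_congr (by ring) (by simp) ?_ (by simp) ?_
      · simp [smul_mul_assoc, mul_smul_comm, smul_smul, pow_succ, mul_comm]
      · rw [hc]
        simp [smul_mul_assoc, mul_smul_comm, smul_smul, pow_succ, List.length_cons, mul_comm]

lemma s1_pow (i : ℕ) : s1 ^ i = blk 1 1 0 0 ((2:ℚ) ^ i • s1 ^ i) := by
  induction i with
  | zero => simpa using one_blk
  | succ i ih =>
    have hp : s1 ^ (i + 1) = s1 * s1 ^ i := pow_succ' s1 i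
    have hstep : s1 ^ (i + 1) = blk 1 1 0 0 ((2:ℚ) • s1) * blk 1 1 0 0 ((2:ℚ) ^ i • s1 ^ i) := by
      rw [← s1_blk, ← ih]; exact hp
    conv_lhs => rw [hstep, blk_mul]
    refine blk_congr (by ring) (by simp) (by simp) (by simp) ?_
    rw [hp]
    simp [smul_mul_assoc, mul_smul_comm, smul_smul, pow_succ, mul_comm]

lemma t1_pow (j : ℕ) :
    t1 ^ (j + 1) = blk 0 0 ((2:ℚ) ^ (j + 1) • (s1 * t1 ^ j)) 0 ((2:ℚ) ^ (j + 1) • t1 ^ (j + 1)) := by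
  induction j with
  | zero => simpa using t1_blk
  | succ j ih =>
    have hp : t1 ^ (j + 2) = t1 * t1 ^ (j + 1) := pow_succ' t1 (j + 1)
    have hstep : t1 ^ (j + 2) = blk 0 0 ((2:ℚ) • s1) 0 ((2:ℚ) • t1) *
        blk 0 0 ((2:ℚ) ^ (j + 1) • (s1 * t1 ^ j)) 0 ((2:ℚ) ^ (j + 1) • t1 ^ (j + 1)) := by
      rw [← t1_blk, ← ih]; exact hp
    conv_lhs => rw [hstep, blk_mul]
    refine blk_congr (by ring) (by simp) ?_ (by simp) ?_
    · simp [smul_mul_assoc, mul_smul_comm, smul_smul, pow_succ, mul_comm]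
    · rw [hp]
      simp [smul_mul_assoc, mul_smul_comm, smul_smul, pow_succ, mul_comm]

/-- For a monomial `m = s^{i₁} t^{j₁} m'` with `j₁ ≥ 1` and `m'` any monomial, writing
`|m| = i₁ + j₁ + |m'|` for its formal length, one has the block identity
`m = [[0, 2^{|m|-i₁} s t^{j₁-1} m'], [0, 2^{|m|} m]]`. -/
theorem monomial_block_form (i₁ j₁ : ℕ) (hj : 1 ≤ j₁) (w' : List Bool) :
    s1 ^ i₁ * t1 ^ j₁ * mono1 w' =
      blk 0 0 ((2 : ℚ) ^ (j₁ + w'.length) • (s1 * t1 ^ (j₁ - 1) * mono1 w')) 0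
        ((2 : ℚ) ^ (i₁ + j₁ + w'.length) • (s1 ^ i₁ * t1 ^ j₁ * mono1 w')) := by
  obtain ⟨j, rfl⟩ : ∃ j, j₁ = j + 1 := ⟨j₁ - 1, (Nat.succ_pred_eq_of_pos hj).symm⟩
  obtain ⟨e, A, B, hw⟩ := mono1_blk w'
  have h1 : t1 ^ (j + 1) * mono1 w' =
      blk 0 0 ((2:ℚ) ^ (j + 1 + w'.length) • (s1 * t1 ^ j * mono1 w')) 0
        ((2:ℚ) ^ (j + 1 + w'.length) • (t1 ^ (j + 1) * mono1 w')) := by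
    conv_lhs => rw [t1_pow j, hw]
    rw [blk_mul]
    refine blk_congr (by ring) (by simp) ?_ (by simp) ?_
    · simp only [zero_mul, zero_add, smul_mul_assoc, mul_smul_comm, smul_smul, mul_assoc]
      congr 1; ring
    · simp only [zero_mul, zero_add, smul_mul_assoc, mul_smul_comm, smul_smul, mul_assoc,
        pow_succ]
      congr 1; ring
  conv_lhs => rw [mul_assoc, h1, s1_pow i₁]
  rw [blk_mul]
  refine blk_congr (by ring) (by simp) ?_ (by simp) ?_
  · simp [Nat.add_sub_cancel]
  · simp only [zero_mul, zero_add, smul_mul_assoc, mul_smul_comm, smul_smul, mul_assoc,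
      smul_zero, mul_zero, pow_succ]
    congr 1; ring

end
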